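/- Define d : ℝ × ℝ → ℝ by d(x,y) = 1 if x = y, d(x,y) = 2 if 0 < |x − y| ≤ 1, and d(x,y) = |x − y| if |x − y| > 1 (a g-quasi metric of index 1), and let d' be the product g-quasi metric of d with itself on ℝ × ℝ. Define sequences x_n = 1 if n is odd and x_n = 10ⁿ if n is even, and y_n = 10ⁿ if n is odd and y_n = 1 if n is even. Then (x_n) and (y_n) are each pseudo-Cauchy in (ℝ, d), but the sequence ((x_n, y_n)) is not pseudo-Cauchy in (ℝ × ℝ, d'): for every pair of distinct indices m, q ≥ 1 one has d'((x_m, y_m),(x_q, y_q)) > 2. -/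
import Mathlib


/-- A g-quasi metric of index `r` on `X`. -/
def IsGQM {X : Type*} (d : X → X → ℝ) (r : ℝ) : Prop :=
  (∀ x y, r ≤ d x y) ∧ (∀ x y, d x y = r ↔ x = y) ∧
    (∀ x y z, d x y ≤ d x z + d z y)

/-- The open ball of a g-quasi metric. -/
def gball {X : Type*} (d : X → X → ℝ) (x : X) (p : ℝ) : Set X := {y | d x y < p}

/-- The generalized topology induced by a g-quasi metric: `U ∈ mu d` iff every point
of `U` lies in some ball contained in `U`. -/
def mu {X : Type*} (d : X → X → ℝ) : Set (Set X) :=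
  {U | ∀ u ∈ U, ∃ x p, 0 < p ∧ u ∈ gball d x p ∧ gball d x p ⊆ U}

/-- Product g-quasi metric. -/
def prodGQM {X Y : Type*} (dX : X → X → ℝ) (dY : Y → Y → ℝ) :
    X × Y → X × Y → ℝ :=
  fun a b => max (dX a.1 b.1) (dY a.2 b.2)

/-- Cauchy sequence in a g-quasi metric space of index `r`. -/
def CauchySeqGQM {X : Type*} (d : X → X → ℝ) (r : ℝ) (x : ℕ → X) : Prop :=
  ∀ ε > r, ∃ k, ∀ m ≥ k, ∀ n ≥ k, d (x m) (x n) < ε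

/-- G-Cauchy sequence in a g-quasi metric space of index `r`. -/
def GCauchySeqGQM {X : Type*} (d : X → X → ℝ) (r : ℝ) (x : ℕ → X) : Prop :=
  ∀ ε > r, ∃ k, ∀ n ≥ k, d (x n) (x (n + 1)) < ε

/-- Pseudo-Cauchy sequence in a g-quasi metric space of index `r`. -/
def PseudoCauchySeqGQM {X : Type*} (d : X → X → ℝ) (r : ℝ) (x : ℕ → X) : Prop :=
  ∀ ε > r, ∀ k, ∃ p q, p ≠ q ∧ k ≤ p ∧ k ≤ q ∧ d (x p) (x q) < ε

/-- Convergence of a sequence in a g-quasi metric space (i.e. in `(X, μ(d))`). -/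
def ConvergesToGQM {X : Type*} (d : X → X → ℝ) (x : ℕ → X) (c : X) : Prop :=
  ∀ y p, 0 < p → c ∈ gball d y p → ∃ k, ∀ n ≥ k, x n ∈ gball d y p

/-- Cluster point of a sequence in a g-quasi metric space (i.e. in `(X, μ(d))`). -/
def IsClusterPtGQM {X : Type*} (d : X → X → ℝ) (x : ℕ → X) (c : X) : Prop :=
  ∀ y p, 0 < p → c ∈ gball d y p → ∀ k, ∃ n ≥ k, x n ∈ gball d y p

/-- Completeness of a g-quasi metric space of index `r`. -/
def CompleteGQM {X : Type*} (d : X → X → ℝ) (r : ℝ) : Prop :=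
  ∀ x : ℕ → X, CauchySeqGQM d r x → ∃ c, ConvergesToGQM d x c

/-- G-completeness of a g-quasi metric space of index `r`. -/
def GCompleteGQM {X : Type*} (d : X → X → ℝ) (r : ℝ) : Prop :=
  ∀ x : ℕ → X, GCauchySeqGQM d r x → ∃ c, ConvergesToGQM d x c

/-- Weak G-completeness of a g-quasi metric space of index `r`. -/
def WeakGCompleteGQM {X : Type*} (d : X → X → ℝ) (r : ℝ) : Prop :=
  ∀ x : ℕ → X, GCauchySeqGQM d r x → ∃ c, IsClusterPtGQM d x c

/-- Lebesgue property: every pseudo-Cauchy sequence of pairwise distinct terms clusters. -/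
def LebesgueGQM {X : Type*} (d : X → X → ℝ) (r : ℝ) : Prop :=
  ∀ x : ℕ → X, PseudoCauchySeqGQM d r x → Function.Injective x →
    ∃ c, IsClusterPtGQM d x c

/-- Strong Lebesgue property: every pseudo-Cauchy sequence clusters. -/
def StronglyLebesgueGQM {X : Type*} (d : X → X → ℝ) (r : ℝ) : Prop :=
  ∀ x : ℕ → X, PseudoCauchySeqGQM d r x → ∃ c, IsClusterPtGQM d x c

/-- A generalized topology: contains `∅` and is closed under arbitrary unions. -/
def IsGenTop {X : Type*} (μ : Set (Set X)) : Prop :=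
  ∅ ∈ μ ∧ ∀ S : Set (Set X), S ⊆ μ → ⋃₀ S ∈ μ

/-- The g-quasi metric of Example 3.7: `d x y = r` if `x = y`, `2r` if `0 < |x-y| ≤ r`,
and `|x-y|` if `|x-y| > r`. -/
noncomputable def dEx (r : ℝ) (x y : ℝ) : ℝ :=
  if x = y then r else if |x - y| ≤ r then 2 * r else |x - y|

/-- The sequence `x_n = 1` for odd `n`, `10^n` for even `n`. -/
noncomputable def xSeq (n : ℕ) : ℝ := if n % 2 = 1 then 1 else (10 : ℝ) ^ n

/-- The sequence `y_n = 10^n` for odd `n`, `1` for even `n`. -/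
noncomputable def ySeq (n : ℕ) : ℝ := if n % 2 = 1 then (10 : ℝ) ^ n else 1


lemma dEx_self (a : ℝ) : dEx 1 a a = 1 := by simp [dEx]

lemma dEx_big {a b : ℝ} (h : 2 < |a - b|) : 2 < dEx 1 a b := by
  have hne : a ≠ b := by
    intro he; rw [he] at h; simp at h; linarith
  have hgt : ¬ |a - b| ≤ 1 := by
    intro hle; linarith
  rw [dEx, if_neg hne, if_neg hgt]; exact h

lemma ten_pow_ge {n : ℕ} (hn : 1 ≤ n) : (10 : ℝ) ≤ 10 ^ n := by
  calc (10:ℝ) = 10 ^ 1 := (pow_one 10).symm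
  _ ≤ 10 ^ n := pow_le_pow_right₀ (by norm_num) hn

lemma gap1 {n : ℕ} (hn : 1 ≤ n) : 2 < |(1 : ℝ) - 10 ^ n| := by
  have h := ten_pow_ge hn
  have h1 := neg_abs_le ((1:ℝ) - 10 ^ n)
  linarith

lemma gap2 {m q : ℕ} (hlt : m < q) (hm : 1 ≤ m) : 2 < |(10 : ℝ) ^ m - 10 ^ q| := by
  have h1 : (10:ℝ) ≤ 10 ^ m := ten_pow_ge hm
  have h2 : (10:ℝ) ^ m < 10 ^ q := by
    apply pow_lt_pow_right₀ (by norm_num) hlt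
  have h3 : (10:ℝ) ^ (m + 1) ≤ 10 ^ q := pow_le_pow_right₀ (by norm_num) hlt
  have h4 : (10:ℝ) ^ (m + 1) = 10 * 10 ^ m := by ring
  have h5 := neg_abs_le ((10:ℝ) ^ m - 10 ^ q)
  nlinarith

lemma gap2' {m q : ℕ} (hne : m ≠ q) (hm : 1 ≤ m) (hq : 1 ≤ q) :
    2 < |(10 : ℝ) ^ m - 10 ^ q| := by
  rcases lt_or_gt_of_ne hne with h | h
  · exact gap2 h hm
  · rw [abs_sub_comm]; exact gap2 h hq

theorem stmt15 :
    PseudoCauchySeqGQM (dEx 1) 1 xSeq ∧ PseudoCauchySeqGQM (dEx 1) 1 ySeq ∧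
      (∀ m q : ℕ, m ≠ q → 1 ≤ m → 1 ≤ q →
        2 < prodGQM (dEx 1) (dEx 1) (xSeq m, ySeq m) (xSeq q, ySeq q)) ∧
      ¬ PseudoCauchySeqGQM (prodGQM (dEx 1) (dEx 1)) 1 (fun n => (xSeq n, ySeq n)) := by
  have hxodd : ∀ n, n % 2 = 1 → xSeq n = 1 := fun n h => by simp [xSeq, h]
  have hxeven : ∀ n, n % 2 = 0 → xSeq n = 10 ^ n := fun n h => by simp [xSeq, h]
  have hyodd : ∀ n, n % 2 = 1 → ySeq n = 10 ^ n := fun n h => by simp [ySeq, h]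
  have hyeven : ∀ n, n % 2 = 0 → ySeq n = 1 := fun n h => by simp [ySeq, h]
  have key : ∀ m q : ℕ, m ≠ q → 1 ≤ m → 1 ≤ q →
      2 < prodGQM (dEx 1) (dEx 1) (xSeq m, ySeq m) (xSeq q, ySeq q) := by
    intro m q hne hm hq
    rcases Nat.mod_two_eq_zero_or_one m with hm2 | hm2 <;>
      rcases Nat.mod_two_eq_zero_or_one q with hq2 | hq2
    · -- both even : x coords 10^m, 10^q
      refine lt_of_lt_of_le ?_ (le_max_left _ _)
      rw [hxeven m hm2, hxeven q hq2]
      exact dEx_big (gap2' hne hm hq)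
    · -- m even, q odd : x coords 10^m, 1
      refine lt_of_lt_of_le ?_ (le_max_left _ _)
      rw [hxeven m hm2, hxodd q hq2]
      refine dEx_big ?_
      rw [abs_sub_comm]; exact gap1 hm
    · -- m odd, q even : x coords 1, 10^q
      refine lt_of_lt_of_le ?_ (le_max_left _ _)
      rw [hxodd m hm2, hxeven q hq2]
      exact dEx_big (gap1 hq)
    · -- both odd : y coords 10^m, 10^q
      refine lt_of_lt_of_le ?_ (le_max_right _ _)
      rw [hyodd m hm2, hyodd q hq2]
      exact dEx_big (gap2' hne hm hq)
  refine ⟨?_, ?_, key, ?_⟩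
  · intro ε hε k
    refine ⟨2 * k + 1, 2 * k + 3, by omega, by omega, by omega, ?_⟩
    rw [hxodd _ (by omega), hxodd _ (by omega), dEx_self]; linarith
  · intro ε hε k
    refine ⟨2 * k + 2, 2 * k + 4, by omega, by omega, by omega, ?_⟩
    rw [hyeven _ (by omega), hyeven _ (by omega), dEx_self]; linarith
  · intro h
    obtain ⟨p, q, hpq, hp, hq, hlt⟩ := h 2 (by norm_num) 1
    exact absurd hlt (not_lt.2 (le_of_lt (key p q hpq hp hq)))
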